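/- arXiv:1308.0105 — 3 statements merged into one kernel-verified Lean document; each statement's English description precedes it below -/
import Mathlib

section
/- Let a_1, a_2, a_3 be positive integers. The quotient ring ℂ[x_1,x_2,x_3]/(x_1 x_2, x_2 x_3, x_3 x_1, a_1 x_1^{a_1} - a_2 x_2^{a_2}, a_2 x_2^{a_2} - a_3 x_3^{a_3}) is a ℂ-vector space of dimension μ_A = a_1 + a_2 + a_3 - 1, with basis given by the residue classes of 1, x_i^j (i = 1,2,3, j = 1,...,a_i - 1), and x_1^{a_1}. -/
/-!
Modulo the ideal, every monomial divisible by two distinct variables vanishes, `x_i ^ k` vanishes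
for `k > a_i` (multiply `a_i x_i^{a_i} ≡ a_j x_j^{a_j}` by `x_i`), and `x_i ^ a_i` is a multiple of
`x_{i₀} ^ a_{i₀}`; hence the listed monomials span the quotient. They are independent because the
linear functionals "coefficient of `1`", "coefficient of `x_i ^ k`" (`0 < k < a_i`) and
`∑ i, (a_{i₀} / a_i) · (coefficient of x_i ^ a_i)` vanish on the ideal and are dual to them.
-/

open MvPolynomial Finsupp

theorem map_eq_zero_of_mem_ideal_span {A V : Type*} [CommSemiring A] [AddCommMonoid V]
    (f : A →+ V) {s : Set A} (hs : ∀ g ∈ s, ∀ q, f (q * g) = 0) {p : A}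
    (hp : p ∈ Ideal.span s) : f p = 0 := by
  obtain ⟨c, hc, rfl⟩ := Submodule.mem_span_set.mp hp
  rw [Finsupp.sum, map_sum]
  exact Finset.sum_eq_zero fun g hg => hs g (hc hg) (c g)

theorem Nat.pos_of_cast_ne_zero {R : Type*} [AddMonoidWithOne R] {n : ℕ} (h : (n : R) ≠ 0) :
    0 < n :=
  Nat.pos_of_ne_zero fun hn => h (by rw [hn, Nat.cast_zero])

namespace MvPolynomial

section Coeff

variable {σ R : Type*} [CommSemiring R]

theorem coeff_mul_X_pow_of_lt {m : σ →₀ ℕ} {u : σ} {n : ℕ} (h : m u < n)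
    (p : MvPolynomial σ R) : coeff m (p * X u ^ n) = 0 := by
  rw [X_pow_eq_monomial, coeff_mul_monomial', if_neg (by rwa [single_le_iff, not_le])]

theorem coeff_single_mul_X_pow_self (u : σ) (n : ℕ) (p : MvPolynomial σ R) :
    coeff (single u n) (p * X u ^ n) = coeff 0 p := by
  simpa [X_pow_eq_monomial] using coeff_mul_monomial 0 (single u n) (1 : R) p

theorem coeff_single_mul_X_mul_X {u v : σ} (huv : u ≠ v) (i : σ) (k : ℕ)
    (p : MvPolynomial σ R) : coeff (single i k) (p * (X u * X v)) = 0 := by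
  rcases eq_or_ne i u with rfl | hiu
  · rw [← mul_assoc, ← pow_one (X v)]
    exact coeff_mul_X_pow_of_lt (by simp [huv]) _
  · rw [mul_comm (X u), ← mul_assoc, ← pow_one (X u)]
    exact coeff_mul_X_pow_of_lt (by simp [hiu]) _

end Coeff

variable {σ K : Type*} [Field K]

variable (K) in
noncomputable def balancedPowerIdeal (a : σ → ℕ) : Ideal (MvPolynomial σ K) :=
  Ideal.span {p | ∃ i j, i ≠ j ∧ X i * X j = p} ⊔
    Ideal.span (Set.range fun ij : σ × σ =>
      C (a ij.1 : K) * X ij.1 ^ a ij.1 - C (a ij.2 : K) * X ij.2 ^ a ij.2)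

namespace BalancedPowerIdeal

variable {a : σ → ℕ}

theorem X_mul_X_mem {i j : σ} (hij : i ≠ j) : X i * X j ∈ balancedPowerIdeal K a :=
  Ideal.mem_sup_left (Ideal.subset_span ⟨i, j, hij, rfl⟩)

variable (K a) in
theorem binomial_mem (i j : σ) :
    C (a i : K) * X i ^ a i - C (a j : K) * X j ^ a j ∈ balancedPowerIdeal K a :=
  Ideal.mem_sup_right (Ideal.subset_span ⟨(i, j), rfl⟩)

theorem monomial_mem {m : σ →₀ ℕ} {i j : σ} (hij : i ≠ j) (hi : m i ≠ 0) (hj : m j ≠ 0)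
    (c : K) : monomial m c ∈ balancedPowerIdeal K a := by
  classical
  refine Ideal.mem_of_dvd _ ?_ (X_mul_X_mem hij)
  rw [X, X, monomial_mul, one_mul, monomial_dvd_monomial]
  refine ⟨Or.inr fun k => ?_, one_dvd c⟩
  rw [Finsupp.add_apply, single_apply, single_apply]
  split_ifs <;> subst_vars <;> first | omega | exact absurd rfl hij

theorem X_pow_mem [Nontrivial σ] (ha : ∀ i, (a i : K) ≠ 0) {i : σ} {k : ℕ} (hk : a i < k) :
    X i ^ k ∈ balancedPowerIdeal K a := by
  obtain ⟨j, hji⟩ := exists_ne i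
  obtain ⟨t, rfl⟩ := Nat.exists_eq_add_of_lt hk
  obtain ⟨s, hs⟩ := Nat.exists_eq_add_one_of_ne_zero (Nat.pos_of_cast_ne_zero (ha j)).ne'
  rw [← Ideal.unit_mul_mem_iff_mem _ ((isUnit_iff_ne_zero.mpr (ha i)).map C)]
  have hsplit : C (a i : K) * X i ^ (a i + t + 1) =
      X i ^ (t + 1) * (C (a i : K) * X i ^ a i - C (a j : K) * X j ^ a j) +
        C (a j : K) * X i ^ t * X j ^ s * (X i * X j) := by
    rw [hs]; ring
  rw [hsplit]
  exact add_mem (Ideal.mul_mem_left _ _ (binomial_mem K a i j))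
    (Ideal.mul_mem_left _ _ (X_mul_X_mem hji.symm))

variable (a) in
abbrev Idx := Unit ⊕ (Σ i, Fin (a i - 1)) ⊕ Unit

variable (K) in
noncomputable def basisMonomial (a : σ → ℕ) (i₀ : σ) : Idx a → MvPolynomial σ K
  | .inl _ => 1
  | .inr (.inl ⟨i, j⟩) => X i ^ (j.val + 1)
  | .inr (.inr _) => X i₀ ^ a i₀

local notation "mk" => Ideal.Quotient.mk (balancedPowerIdeal K a)

theorem mk_X_pow_self (ha : ∀ i, (a i : K) ≠ 0) (i i₀ : σ) :
    mk (X i ^ a i) = ((a i₀ : K) / a i) • mk (X i₀ ^ a i₀) := by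
  rw [← Ideal.Quotient.mkₐ_eq_mk K, ← map_smul, smul_eq_C_mul, Ideal.Quotient.mkₐ_eq_mk,
    Ideal.Quotient.eq]
  have hinv : C (a i : K)⁻¹ * C (a i : K) = (1 : MvPolynomial σ K) := by
    rw [← C_mul, inv_mul_cancel₀ (ha i), C_1]
  convert Ideal.mul_mem_left _ (C (a i : K)⁻¹) (binomial_mem K a i i₀) using 1
  rw [div_eq_inv_mul, C_mul]
  linear_combination (-X i ^ a i) * hinv

theorem mk_X_pow_mem_span [Nontrivial σ] (ha : ∀ i, (a i : K) ≠ 0) (i₀ i : σ) (k : ℕ) :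
    mk (X i ^ k) ∈ Submodule.span K (Set.range fun b => mk (basisMonomial K a i₀ b)) := by
  rcases lt_trichotomy k (a i) with hk | rfl | hk
  · rcases Nat.eq_zero_or_pos k with rfl | hk0
    · exact Submodule.subset_span ⟨.inl (), by simp [basisMonomial]⟩
    · refine Submodule.subset_span ⟨.inr (.inl ⟨i, k - 1, by omega⟩), ?_⟩
      simp [basisMonomial, Nat.sub_add_cancel hk0]
  · rw [mk_X_pow_self ha i i₀]
    exact Submodule.smul_mem _ _ (Submodule.subset_span ⟨.inr (.inr ()), rfl⟩)
  · rw [Ideal.Quotient.eq_zero_iff_mem.mpr (X_pow_mem ha hk)]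
    exact zero_mem _

theorem mk_monomial_mem_span [Nontrivial σ] (ha : ∀ i, (a i : K) ≠ 0) (i₀ : σ)
    (m : σ →₀ ℕ) (c : K) :
    mk (monomial m c) ∈ Submodule.span K (Set.range fun b => mk (basisMonomial K a i₀ b)) := by
  rcases le_or_gt m.support.card 1 with hm | hm
  · obtain ⟨i, hi⟩ := card_support_le_one.mp hm
    rw [← mul_one c, ← smul_eq_mul, ← smul_monomial, ← Ideal.Quotient.mkₐ_eq_mk K, map_smul,
      Ideal.Quotient.mkₐ_eq_mk, hi, ← X_pow_eq_monomial]
    exact Submodule.smul_mem _ _ (mk_X_pow_mem_span ha i₀ i _)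
  · obtain ⟨i, hi, j, hj, hij⟩ := Finset.one_lt_card.mp hm
    rw [Ideal.Quotient.eq_zero_iff_mem.mpr
      (monomial_mem hij (Finsupp.mem_support_iff.mp hi) (Finsupp.mem_support_iff.mp hj) c)]
    exact zero_mem _

theorem span_basisMonomial [Nontrivial σ] (ha : ∀ i, (a i : K) ≠ 0) (i₀ : σ) :
    Submodule.span K (Set.range fun b => mk (basisMonomial K a i₀ b)) = ⊤ := by
  refine Submodule.eq_top_iff'.mpr fun x => ?_
  obtain ⟨p, rfl⟩ := Ideal.Quotient.mk_surjective x
  induction p using MvPolynomial.induction_on' with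
  | monomial m c => exact mk_monomial_mem_span ha i₀ m c
  | add p q hp hq => exact (map_add mk p q).symm ▸ add_mem hp hq

variable [Fintype σ]

-- The weights `a i₀ / a i` make the last coordinate vanish on `q * (a_u X_u^a_u - a_v X_v^a_v)`.
variable (K a) in
noncomputable def coords (i₀ : σ) : MvPolynomial σ K →ₗ[K] (Idx a → K) :=
  LinearMap.pi fun
    | .inl _ => lcoeff K 0
    | .inr (.inl ⟨i, j⟩) => lcoeff K (single i (j.val + 1))
    | .inr (.inr _) => ∑ i, ((a i₀ : K) / a i) • lcoeff K (single i (a i))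

theorem coords_mul_X_mul_X (i₀ : σ) {u v : σ} (huv : u ≠ v) (q : MvPolynomial σ K) :
    coords K a i₀ (q * (X u * X v)) = 0 := by
  funext b
  rcases b with _ | ⟨i, j⟩ | _ <;> simp only [coords, LinearMap.pi_apply, lcoeff_apply]
  · rw [← single_zero u, coeff_single_mul_X_mul_X huv]; rfl
  · rw [coeff_single_mul_X_mul_X huv]; rfl
  · simp [coeff_single_mul_X_mul_X huv]

theorem coords_mul_X_pow_self [DecidableEq σ] (ha : ∀ i, (a i : K) ≠ 0) (i₀ u : σ)
    (q : MvPolynomial σ K) :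
    coords K a i₀ (q * X u ^ a u) = Pi.single (.inr (.inr ())) ((a i₀ : K) / a u * coeff 0 q) := by
  have hu := Nat.pos_of_cast_ne_zero (ha u)
  funext b
  rcases b with _ | ⟨i, j⟩ | _ <;> simp only [coords, LinearMap.pi_apply, lcoeff_apply]
  · rw [coeff_mul_X_pow_of_lt hu]; simp
  · rw [coeff_mul_X_pow_of_lt]
    · simp
    · rw [single_apply]
      split_ifs with h
      · subst h; have := j.isLt; omega
      · exact hu
  · rw [LinearMap.sum_apply, Finset.sum_eq_single u]
    · simp [coeff_single_mul_X_pow_self]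
    · intro i _ hiu
      rw [LinearMap.smul_apply, lcoeff_apply, coeff_mul_X_pow_of_lt, smul_zero]
      simpa [single_apply, hiu] using hu
    · simp

theorem coords_mul_binomial [DecidableEq σ] (ha : ∀ i, (a i : K) ≠ 0) (i₀ u v : σ)
    (q : MvPolynomial σ K) :
    coords K a i₀ (q * (C (a u : K) * X u ^ a u - C (a v : K) * X v ^ a v)) = 0 := by
  have hu := ha u
  have hv := ha v
  rw [show q * (C (a u : K) * X u ^ a u - C (a v : K) * X v ^ a v) =
      (a u : K) • (q * X u ^ a u) - (a v : K) • (q * X v ^ a v) by simp only [smul_eq_C_mul]; ring,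
    map_sub, map_smul, map_smul, coords_mul_X_pow_self ha, coords_mul_X_pow_self ha,
    ← Pi.single_smul, ← Pi.single_smul, ← Pi.single_sub, smul_eq_mul, smul_eq_mul]
  field_simp
  simp

theorem coords_eq_zero_of_mem [DecidableEq σ] (ha : ∀ i, (a i : K) ≠ 0) (i₀ : σ)
    {p : MvPolynomial σ K} (hp : p ∈ balancedPowerIdeal K a) : coords K a i₀ p = 0 := by
  rw [balancedPowerIdeal, ← Ideal.span_union] at hp
  refine map_eq_zero_of_mem_ideal_span (coords K a i₀).toAddMonoidHom ?_ hp
  rintro _ (⟨u, v, huv, rfl⟩ | ⟨⟨u, v⟩, rfl⟩) q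
  · exact coords_mul_X_mul_X i₀ huv q
  · exact coords_mul_binomial ha i₀ u v q

theorem coords_basisMonomial [DecidableEq σ] (ha : ∀ i, (a i : K) ≠ 0) (i₀ : σ) (b : Idx a) :
    coords K a i₀ (basisMonomial K a i₀ b) = Pi.single b 1 := by
  have hpos i := Nat.pos_of_cast_ne_zero (ha i)
  funext b'
  rcases b with _ | ⟨i, j⟩ | _ <;> rcases b' with _ | ⟨i', j'⟩ | _ <;>
    simp [coords, basisMonomial, coeff_X_pow, coeff_one, Pi.single_apply, single_eq_single_iff,
      -single_add, (hpos _).ne', @eq_comm (σ →₀ ℕ) 0, ite_and, ha]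
  case inr.inl.inr.inl =>
    by_cases h : i = i'
    · subst h; simp [Fin.ext_iff, eq_comm]
    · simp [h, Ne.symm h]
  case inr.inl.inr.inr => exact fun h => absurd h (by have := j.isLt; omega)
  case inr.inr.inr.inl => rintro rfl; have := j'.isLt; omega

theorem linearIndependent_basisMonomial (ha : ∀ i, (a i : K) ≠ 0) (i₀ : σ) :
    LinearIndependent K fun b => mk (basisMonomial K a i₀ b) := by
  classical
  let J := balancedPowerIdeal K a
  let φ := ((J.restrictScalars K).liftQ (coords K a i₀)
    fun _ hp => coords_eq_zero_of_mem ha i₀ hp).comp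
      (Submodule.Quotient.restrictScalarsEquiv K J).symm.toLinearMap
  have hφ : ∀ b, φ (mk (basisMonomial K a i₀ b)) = Pi.basisFun K (Idx a) b := fun b =>
    (coords_basisMonomial ha i₀ b).trans (Pi.basisFun_apply K _ b).symm
  refine LinearIndependent.of_comp φ ?_
  rw [show ⇑φ ∘ _ = ⇑(Pi.basisFun K (Idx a)) from _root_.funext hφ]
  exact (Pi.basisFun K (Idx a)).linearIndependent

variable (K a) in
noncomputable def basis [Nontrivial σ] (ha : ∀ i, (a i : K) ≠ 0) (i₀ : σ) :
    Module.Basis (Idx a) K (MvPolynomial σ K ⧸ balancedPowerIdeal K a) :=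
  .mk (linearIndependent_basisMonomial ha i₀) (span_basisMonomial ha i₀).ge

theorem basis_apply [Nontrivial σ] (ha : ∀ i, (a i : K) ≠ 0) (i₀ : σ) (b : Idx a) :
    basis K a ha i₀ b = mk (basisMonomial K a i₀ b) :=
  Module.Basis.mk_apply _ _ b

theorem finrank_quotient [Nontrivial σ] (ha : ∀ i, (a i : K) ≠ 0) :
    Module.finrank K (MvPolynomial σ K ⧸ balancedPowerIdeal K a) = ∑ i, (a i - 1) + 2 := by
  obtain ⟨i₀⟩ := ‹Nontrivial σ›.to_nonempty
  rw [Module.finrank_eq_card_basis (basis K a ha i₀)]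
  simp only [Fintype.card_sum, Fintype.card_sigma, Fintype.card_fin, Fintype.card_unit]
  ring

end BalancedPowerIdeal

open BalancedPowerIdeal in
theorem balancedPowerIdeal_fin_three (a : Fin 3 → ℕ) :
    balancedPowerIdeal K a = Ideal.span {X 0 * X 1, X 1 * X 2, X 2 * X 0,
      C (a 0 : K) * X 0 ^ a 0 - C (a 1 : K) * X 1 ^ a 1,
      C (a 1 : K) * X 1 ^ a 1 - C (a 2 : K) * X 2 ^ a 2} := by
  set I : Ideal (MvPolynomial (Fin 3) K) := Ideal.span _
  have h01 : X 0 * X 1 ∈ I := Ideal.subset_span (by simp)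
  have h12 : X 1 * X 2 ∈ I := Ideal.subset_span (by simp)
  have h20 : X 2 * X 0 ∈ I := Ideal.subset_span (by simp)
  have b01 : C (a 0 : K) * X 0 ^ a 0 - C (a 1 : K) * X 1 ^ a 1 ∈ I := Ideal.subset_span (by simp)
  have b12 : C (a 1 : K) * X 1 ^ a 1 - C (a 2 : K) * X 2 ^ a 2 ∈ I := Ideal.subset_span (by simp)
  refine le_antisymm (sup_le (Ideal.span_le.mpr ?_) (Ideal.span_le.mpr ?_)) (Ideal.span_le.mpr ?_)
  · rintro _ ⟨i, j, hij, rfl⟩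
    fin_cases i <;> fin_cases j <;> simp only [Fin.zero_eta, Fin.mk_one, Fin.reduceFinMk]
    all_goals first
      | exact absurd rfl hij
      | assumption
      | (rw [mul_comm]; assumption)
  · have b0 : ∀ i, C (a i : K) * X i ^ a i - C (a 0 : K) * X 0 ^ a 0 ∈ I := by
      intro i
      fin_cases i <;> simp only [Fin.zero_eta, Fin.mk_one, Fin.reduceFinMk]
      · simp
      · simpa using neg_mem b01
      · convert neg_mem (add_mem b01 b12) using 1; ring
    rintro _ ⟨⟨i, j⟩, rfl⟩
    simpa using sub_mem (b0 i) (b0 j)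
  · rintro _ (rfl | rfl | rfl | rfl | rfl)
    exacts [X_mul_X_mem (by decide), X_mul_X_mem (by decide), X_mul_X_mem (by decide),
      binomial_mem K a 0 1, binomial_mem K a 1 2]

end MvPolynomial

open MvPolynomial in
theorem stmt_4 (a : Fin 3 → ℕ) (ha : ∀ i, 0 < a i)
    (I : Ideal (MvPolynomial (Fin 3) ℂ))
    (hI : I = Ideal.span {X 0 * X 1, X 1 * X 2, X 2 * X 0,
      C (a 0 : ℂ) * X 0 ^ a 0 - C (a 1 : ℂ) * X 1 ^ a 1,
      C (a 1 : ℂ) * X 1 ^ a 1 - C (a 2 : ℂ) * X 2 ^ a 2}) :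
    Module.finrank ℂ (MvPolynomial (Fin 3) ℂ ⧸ I) = a 0 + a 1 + a 2 - 1 ∧
    ∃ B : Module.Basis (Unit ⊕ ((i : Fin 3) × Fin (a i - 1)) ⊕ Unit) ℂ
        (MvPolynomial (Fin 3) ℂ ⧸ I),
      (B (Sum.inl ()) = Ideal.Quotient.mk I 1) ∧
      (∀ (i : Fin 3) (j : Fin (a i - 1)),
        B (Sum.inr (Sum.inl ⟨i, j⟩)) = Ideal.Quotient.mk I (X i ^ (j.val + 1))) ∧
      (B (Sum.inr (Sum.inr ())) = Ideal.Quotient.mk I (X 0 ^ a 0)) := by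
  have ha' : ∀ i, (a i : ℂ) ≠ 0 := fun i => Nat.cast_ne_zero.mpr (ha i).ne'
  rw [← balancedPowerIdeal_fin_three] at hI
  subst hI
  refine ⟨?_, BalancedPowerIdeal.basis ℂ a ha' 0, ?_, fun i j => ?_, ?_⟩
  · rw [BalancedPowerIdeal.finrank_quotient ha', Fin.sum_univ_three]
    have := ha 0; have := ha 1; have := ha 2
    omega
  all_goals exact BalancedPowerIdeal.basis_apply ha' 0 _
end

section
/- Fix a free module Q of finite rank over ℤ with basis {α_i^∨} and a symmetric bilinear pairing ⟨α_i, α_j^∨⟩ given by a generalized Cartan matrix C of a tree-shaped diagram T_{a_1,a_2,a_3} (three legs of lengths a_1-1, a_2-1, a_3-1 attached to a central node). The determinant of this Cartan matrix equals a_1 a_2 a_3 (1/a_1 + 1/a_2 + 1/a_3 - 1) = a_2 a_3 + a_1 a_3 + a_1 a_2 - a_1 a_2 a_3; in particular the matrix is nondegenerate if and only if χ_A = 1/a_1 + 1/a_2 + 1/a_3 - 1 ≠ 0. -/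
/-- Vertex set of the star-shaped diagram `T_{a₁,a₂,a₃}`: a central vertex
and three legs with `a i - 1` vertices. -/
abbrev starVertex (a : Fin 3 → ℕ) : Type :=
  Unit ⊕ ((i : Fin 3) × Fin (a i - 1))

/-- Adjacency in the star-shaped diagram. -/
def starAdj (a : Fin 3 → ℕ) : starVertex a → starVertex a → Bool
  | Sum.inl _, Sum.inl _ => false
  | Sum.inl _, Sum.inr p => p.2.val == 0
  | Sum.inr p, Sum.inl _ => p.2.val == 0
  | Sum.inr p, Sum.inr p' =>
      p.1 == p'.1 && (p.2.val + 1 == p'.2.val || p'.2.val + 1 == p.2.val)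

/-- The Cartan matrix of the diagram `T_{a₁,a₂,a₃}`. -/
def starCartan (a : Fin 3 → ℕ) : Matrix (starVertex a) (starVertex a) ℤ :=
  fun x y => if x = y then 2 else if starAdj a x y then -1 else 0

/-!
Eliminate the Cartan matrix of the tree symmetrically from the leaves towards the centre. A leg
vertex followed by `m - 1` further vertices of its leg gets the pivot `(m + 1) / m`, since
`2 - m / (m + 1) = (m + 2) / (m + 1)`; these telescope to `a i` along leg `i`, and the first
vertex of leg `i` passes `1 - 1 / a i` on to the centre, whose pivot is therefore
`2 - ∑ (1 - 1 / a i) = χ`. Hence `det C = a₁ a₂ a₃ χ`.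
-/

open Finset Matrix

theorem Matrix.det_of_blockTriangular_of_injective {m α R : Type*} [Fintype m] [DecidableEq m]
    [CommRing R] [LinearOrder α] {M : Matrix m m R} {b : m → α} (hM : M.BlockTriangular b)
    (hb : Function.Injective b) : M.det = ∏ i, M i i := by
  let : LinearOrder m := LinearOrder.lift' b hb
  convert det_of_isUpperTriangular (M := M) hM

section Forest

variable {n K : Type*} [Fintype n] [DecidableEq n] [Field K]
  (par : n → n → Prop) [DecidableRel par] (d : n → K)

/-- For a rooted forest (`par x y`: `x` is the parent of `y`), the symmetric matrix with entries
`-1` along the edges whose elimination from the leaves towards the roots has the pivots `d`. -/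
def forestMatrix : Matrix n n K := fun x y =>
  if x = y then d x + ∑ z with par x z, (d z)⁻¹ else if par x y ∨ par y x then -1 else 0

def forestLower : Matrix n n K := fun x y =>
  if x = y then 1 else if par x y then -(d y)⁻¹ else 0

def forestUpper : Matrix n n K := fun x y =>
  if x = y then d x else if par y x then -1 else 0

variable {par d}

theorem forestLower_mul_apply (hirrefl : ∀ x, ¬ par x x) (N : Matrix n n K) (x y : n) :
    (forestLower par d * N) x y = N x y - ∑ z with par x z, (d z)⁻¹ * N z y := by
  have hsplit : ∀ z, forestLower par d x z * N z y =
      (if x = z then N x y else 0) - if par x z then (d z)⁻¹ * N z y else 0 := by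
    intro z
    by_cases hxz : x = z
    · subst hxz; simp [forestLower, hirrefl]
    · by_cases h : par x z <;> simp [forestLower, hxz, h]
  simp_rw [mul_apply, hsplit, sum_sub_distrib, sum_ite_eq, mem_univ, if_true, sum_filter]

theorem forestLower_mul_forestUpper (hasymm : ∀ ⦃x y⦄, par x y → ¬ par y x)
    (hunique : ∀ ⦃x y z⦄, par x z → par y z → x = y) (hd : ∀ ⦃x y⦄, par x y → d y ≠ 0) :
    forestLower par d * forestUpper par d = forestMatrix par d := by
  have hirrefl : ∀ x, ¬ par x x := fun x h => hasymm h h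
  ext x y
  rw [forestLower_mul_apply hirrefl]
  by_cases hxy : x = y
  · subst hxy
    have hchild : ∀ z ∈ univ.filter (par x), (d z)⁻¹ * forestUpper par d z x = -(d z)⁻¹ := by
      intro z hz
      have hz := (mem_filter.1 hz).2
      have hzx : z ≠ x := by rintro rfl; exact hirrefl z hz
      simp [forestUpper, hz, hzx]
    rw [sum_congr rfl hchild]
    simp [forestMatrix, forestUpper, sub_eq_add_neg]
  · have hchild : ∀ z ∈ univ.filter (par x), (d z)⁻¹ * forestUpper par d z y =
        if z = y then 1 else 0 := by
      intro z hz
      have hz := (mem_filter.1 hz).2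
      by_cases hzy : z = y
      · subst hzy; simp [forestUpper, hd hz]
      · have hyz : ¬ par y z := fun h => hxy (hunique hz h)
        simp [forestUpper, hzy, hyz]
    rw [sum_congr rfl hchild, sum_ite_eq']
    by_cases h₁ : par x y
    · simp [forestMatrix, forestUpper, hxy, h₁, hasymm h₁]
    · by_cases h₂ : par y x <;> simp [forestMatrix, forestUpper, hxy, h₁, h₂]

theorem det_forestMatrix {α : Type*} [LinearOrder α] (f : n → α) (hf : Function.Injective f)
    (hf_par : ∀ ⦃x y⦄, par x y → f y < f x)
    (hunique : ∀ ⦃x y z⦄, par x z → par y z → x = y) (hd : ∀ ⦃x y⦄, par x y → d y ≠ 0) :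
    (forestMatrix par d).det = ∏ x, d x := by
  have hasymm : ∀ ⦃x y⦄, par x y → ¬ par y x := fun _ _ h h' => (hf_par h).not_gt (hf_par h')
  have hL : (forestLower par d).BlockTriangular (OrderDual.toDual ∘ f) := by
    intro x y (hxy : f x < f y)
    have hpar : ¬ par x y := fun h => (hf_par h).not_gt hxy
    simp [forestLower, hf.ne_iff.mp hxy.ne, hpar]
  have hU : (forestUpper par d).BlockTriangular f := by
    intro x y hxy
    have hpar : ¬ par y x := fun h => (hf_par h).not_gt hxy
    simp [forestUpper, hf.ne_iff.mp hxy.ne', hpar]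
  rw [← forestLower_mul_forestUpper hasymm hunique hd, det_mul,
    det_of_blockTriangular_of_injective hL (OrderDual.toDual.injective.comp hf),
    det_of_blockTriangular_of_injective hU hf]
  simp [forestLower, forestUpper]

end Forest

def legPivot (m : ℕ) : ℚ := (m + 1) / m

theorem legPivot_ne_zero {m : ℕ} (hm : m ≠ 0) : legPivot m ≠ 0 := by
  have : (m : ℚ) ≠ 0 := by exact_mod_cast hm
  simp only [legPivot]
  positivity

theorem legPivot_one : legPivot 1 = 2 := by norm_num [legPivot]

theorem legPivot_succ_add_inv_legPivot {m : ℕ} (hm : m ≠ 0) :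
    legPivot (m + 1) + (legPivot m)⁻¹ = 2 := by
  have : (m : ℚ) ≠ 0 := by exact_mod_cast hm
  simp only [legPivot, Nat.cast_add, Nat.cast_one, inv_div]
  field_simp
  ring

theorem inv_legPivot_pred {k : ℕ} (hk : k ≠ 0) : (legPivot (k - 1))⁻¹ = 1 - 1 / k := by
  obtain ⟨m, rfl⟩ := Nat.exists_eq_add_one_of_ne_zero hk
  have : (m : ℚ) + 1 ≠ 0 := by positivity
  simp only [legPivot, Nat.add_sub_cancel, inv_div, Nat.cast_add, Nat.cast_one]
  field_simp
  ring

theorem prod_legPivot (k : ℕ) : ∏ t : Fin k, legPivot (k - t) = k + 1 := by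
  induction k with
  | zero => simp
  | succ k ih =>
    rw [Fin.prod_univ_succ]
    simp only [Fin.val_zero, Nat.sub_zero, Fin.val_succ, Nat.add_sub_add_right, ih]
    rw [legPivot]
    push_cast
    field_simp

section Star

variable {a : Fin 3 → ℕ}

def starParent (a : Fin 3 → ℕ) : starVertex a → starVertex a → Prop
  | Sum.inl _, Sum.inl _ => False
  | Sum.inl _, Sum.inr q => q.2.val = 0
  | Sum.inr _, Sum.inl _ => False
  | Sum.inr p, Sum.inr q => p.1 = q.1 ∧ p.2.val + 1 = q.2.val

instance (a : Fin 3 → ℕ) : DecidableRel (starParent a) := fun x y => by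
  cases x <;> cases y <;> unfold starParent <;> infer_instance

theorem starAdj_iff (x y : starVertex a) :
    starAdj a x y = true ↔ starParent a x y ∨ starParent a y x := by
  rcases x with _ | ⟨i, t⟩ <;> rcases y with _ | ⟨j, s⟩ <;>
    simp only [starAdj, starParent, Bool.false_eq_true, Bool.and_eq_true, Bool.or_eq_true,
      beq_iff_eq, or_self, or_false, false_or]
  constructor
  · rintro ⟨rfl, h | h⟩ <;> simp [h]
  · rintro (⟨rfl, h⟩ | ⟨rfl, h⟩) <;> simp [h]

theorem starParent_unique ⦃x y z : starVertex a⦄ (hx : starParent a x z)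
    (hy : starParent a y z) : x = y := by
  rcases x with _ | ⟨i, t⟩ <;> rcases y with _ | ⟨j, s⟩ <;> rcases z with _ | ⟨k, u⟩ <;>
    simp only [starParent] at hx hy
  · rfl
  · omega
  · omega
  · obtain ⟨rfl, hx⟩ := hx
    obtain ⟨rfl, hy⟩ := hy
    obtain rfl : t = s := Fin.ext (by omega)
    rfl

-- Children come before their parents: a leg vertex is keyed by the length of the leg beyond it.
def starKey (a : Fin 3 → ℕ) : starVertex a → ℕ ×ₗ ℕ
  | Sum.inl _ => toLex (a 0 + a 1 + a 2, 0)
  | Sum.inr p => toLex (a p.1 - 1 - p.2, p.1)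

theorem starKey_inr_lt_starKey_inl (p : (i : Fin 3) × Fin (a i - 1)) :
    starKey a (Sum.inr p) < starKey a (Sum.inl ()) := by
  obtain ⟨i, t⟩ := p
  have : a i ≤ a 0 + a 1 + a 2 := by fin_cases i <;> simp <;> omega
  exact Prod.Lex.toLex_lt_toLex.2 (Or.inl (show a i - 1 - t < a 0 + a 1 + a 2 by omega))

theorem starKey_injective : Function.Injective (starKey a) := by
  intro x y h
  rcases x with ⟨⟨⟩⟩ | ⟨i, t⟩ <;> rcases y with ⟨⟨⟩⟩ | ⟨j, s⟩
  · rfl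
  · exact absurd h (starKey_inr_lt_starKey_inl _).ne'
  · exact absurd h (starKey_inr_lt_starKey_inl _).ne
  · simp only [starKey, toLex_inj, Prod.mk.injEq] at h
    obtain ⟨h₁, h₂⟩ := h
    obtain rfl : i = j := Fin.ext h₂
    obtain rfl : t = s := Fin.ext (by omega)
    rfl

theorem starKey_lt_of_starParent ⦃x y : starVertex a⦄ (h : starParent a x y) :
    starKey a y < starKey a x := by
  rcases x with ⟨⟨⟩⟩ | ⟨i, t⟩ <;> rcases y with _ | ⟨j, s⟩ <;> simp only [starParent] at h
  · exact starKey_inr_lt_starKey_inl _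
  · obtain ⟨rfl, h⟩ := h
    exact Prod.Lex.toLex_lt_toLex.2 (Or.inl (show a i - 1 - s < a i - 1 - t by omega))

def starPivot (a : Fin 3 → ℕ) : starVertex a → ℚ
  | Sum.inl _ => 1 / a 0 + 1 / a 1 + 1 / a 2 - 1
  | Sum.inr p => legPivot (a p.1 - 1 - p.2)

theorem starPivot_ne_zero_of_starParent ⦃x y : starVertex a⦄ (h : starParent a x y) :
    starPivot a y ≠ 0 := by
  rcases x with _ | ⟨i, t⟩ <;> rcases y with _ | ⟨j, s⟩ <;> simp only [starParent] at h
  all_goals exact legPivot_ne_zero (by omega)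

theorem sum_inv_starPivot_children_inl (ha : ∀ i, a i ≠ 0) :
    ∑ z with starParent a (Sum.inl ()) z, (starPivot a z)⁻¹ = ∑ i, (1 - 1 / (a i : ℚ)) := by
  rw [sum_filter, Fintype.sum_sum_type, Fintype.sum_sigma]
  simp only [starParent, starPivot, ↓reduceIte, sum_const_zero, zero_add]
  refine sum_congr rfl fun i _ => ?_
  rcases Nat.eq_zero_or_pos (a i - 1) with h | h
  · have : IsEmpty (Fin (a i - 1)) := h ▸ Fin.isEmpty'
    have : a i = 1 := by have := ha i; omega
    simp [this]
  · rw [sum_eq_single ⟨0, h⟩ (fun t _ ht => if_neg fun h0 => ht (Fin.ext h0)) (by simp)]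
    simpa using inv_legPivot_pred (ha i)

theorem sum_inv_starPivot_children_inr (p : (i : Fin 3) × Fin (a i - 1)) :
    ∑ z with starParent a (Sum.inr p) z, (starPivot a z)⁻¹ = 2 - starPivot a (Sum.inr p) := by
  obtain ⟨i, t⟩ := p
  rw [sum_filter, Fintype.sum_sum_type]
  simp only [starParent, starPivot, ↓reduceIte, sum_const_zero, zero_add]
  by_cases h : t.val + 1 < a i - 1
  · rw [sum_eq_single ⟨i, ⟨t + 1, h⟩⟩]
    · have hm : a i - 1 - t = (a i - 1 - (t + 1)) + 1 := by omega
      simp only [hm, and_self, ↓reduceIte]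
      rw [← legPivot_succ_add_inv_legPivot (by omega : a i - 1 - (t + 1) ≠ 0)]
      ring
    · rintro ⟨j, s⟩ _ hne
      refine if_neg ?_
      rintro ⟨rfl, hs⟩
      exact hne (by simp only [Sigma.mk.injEq, heq_eq_eq, true_and]; ext; simp [hs])
    · simp
  · rw [sum_eq_zero]
    · rw [(by omega : a i - 1 - t = 1), legPivot_one]
      ring
    · rintro ⟨j, s⟩ _
      refine if_neg ?_
      rintro ⟨rfl, hs⟩
      exact h (hs ▸ s.isLt)

theorem starPivot_add_sum_inv_children (ha : ∀ i, a i ≠ 0) (x : starVertex a) :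
    starPivot a x + ∑ z with starParent a x z, (starPivot a z)⁻¹ = 2 := by
  rcases x with ⟨⟨⟩⟩ | p
  · rw [sum_inv_starPivot_children_inl ha, Fin.sum_univ_three]
    simp only [starPivot]
    ring
  · rw [sum_inv_starPivot_children_inr]
    ring

theorem starCartan_map_eq_forestMatrix (ha : ∀ i, a i ≠ 0) :
    (starCartan a).map (Int.cast : ℤ → ℚ) = forestMatrix (starParent a) (starPivot a) := by
  ext x y
  by_cases hxy : x = y
  · subst hxy
    simp [starCartan, forestMatrix, starPivot_add_sum_inv_children ha]
  · simp only [map_apply, starCartan, forestMatrix, hxy, ↓reduceIte, starAdj_iff]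
    split_ifs <;> norm_num

theorem prod_starPivot (ha : ∀ i, a i ≠ 0) :
    ∏ x, starPivot a x = a 0 * a 1 * a 2 * (1 / a 0 + 1 / a 1 + 1 / a 2 - 1 : ℚ) := by
  have hleg : ∀ i, ∏ t : Fin (a i - 1), starPivot a (Sum.inr ⟨i, t⟩) = a i := by
    intro i
    have hi : ((a i - 1 : ℕ) : ℚ) + 1 = a i := by
      rw [Nat.cast_sub (Nat.one_le_iff_ne_zero.2 (ha i))]
      ring
    rw [← hi, ← prod_legPivot]
    rfl
  rw [Fintype.prod_sum_type, Fintype.prod_sigma]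
  simp only [hleg, Fin.prod_univ_three, Fintype.prod_unique]
  simp only [starPivot]
  ring

theorem det_starCartan (ha : ∀ i, a i ≠ 0) :
    ((starCartan a).det : ℚ) = a 0 * a 1 * a 2 * (1 / a 0 + 1 / a 1 + 1 / a 2 - 1 : ℚ) := by
  rw [Int.cast_det, starCartan_map_eq_forestMatrix ha,
    det_forestMatrix (starKey a) starKey_injective starKey_lt_of_starParent starParent_unique
      starPivot_ne_zero_of_starParent, prod_starPivot ha]

end Star

theorem stmt_14 (a : Fin 3 → ℕ) (ha : ∀ i, 0 < a i) :
    (starCartan a).det =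
      (a 1 : ℤ) * a 2 + (a 0 : ℤ) * a 2 + (a 0 : ℤ) * a 1 -
        (a 0 : ℤ) * a 1 * a 2 ∧
    ((starCartan a).det ≠ 0 ↔
      (1 : ℚ) / a 0 + 1 / a 1 + 1 / a 2 - 1 ≠ 0) := by
  have ha' : ∀ i, (a i : ℚ) ≠ 0 := fun i => by exact_mod_cast (ha i).ne'
  have hdet := det_starCartan fun i => (ha i).ne'
  constructor
  · have hcast : ((a 1 * a 2 + a 0 * a 2 + a 0 * a 1 - a 0 * a 1 * a 2 : ℤ) : ℚ) =
        a 0 * a 1 * a 2 * (1 / a 0 + 1 / a 1 + 1 / a 2 - 1 : ℚ) := by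
      have h0 := ha' 0; have h1 := ha' 1; have h2 := ha' 2
      push_cast
      field_simp
    exact_mod_cast hdet.trans hcast.symm
  · rw [← Int.cast_ne_zero (α := ℚ), hdet]
    simp [ha']
end

section
/- Let a_1 ≤ a_2 ≤ a_3 be positive integers with χ_A = 1/a_1 + 1/a_2 + 1/a_3 - 1 < 0, and consider the formal power series expansion of 1/(−f_A) with f_A = x_1^{a_1}+x_2^{a_2}+x_3^{a_3} - q^{-1}x_1x_2x_3, expanded as (q/(x_1x_2x_3))·Σ_{n≥0} (q(x_1^{a_1}+x_2^{a_2}+x_3^{a_3})/(x_1x_2x_3))^n. Then the constant term (coefficient of x_1^0 x_2^0 x_3^0 after multiplying by q^{-1} x_1 x_2 x_3) equals 1; equivalently, for all n ≥ 1, the Laurent polynomial ((x_1^{a_1}+x_2^{a_2}+x_3^{a_3})/(x_1x_2x_3))^n has zero constant term. -/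
/-!
Give the variable `x_i` the rational weight `1 / a_i`. Then every `x_i ^ a_i` has weight `1`, so
`(x_1 ^ a_1 + x_2 ^ a_2 + x_3 ^ a_3) ^ n` is weighted homogeneous of weight `n`, whereas the
monomial `x_1 ^ n x_2 ^ n x_3 ^ n` has weight `n (1 / a_1 + 1 / a_2 + 1 / a_3)`, which differs
from `n` as soon as `n ≠ 0` and `1 / a_1 + 1 / a_2 + 1 / a_3 ≠ 1`.
-/

namespace MvPolynomial

variable {σ R : Type*} [CommSemiring R]

theorem isWeightedHomogeneous_sum_X_pow (a : σ → ℕ) (ha : ∀ i, a i ≠ 0) (s : Finset σ) :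
    IsWeightedHomogeneous (fun i ↦ (a i : ℚ)⁻¹) (∑ i ∈ s, X i ^ a i : MvPolynomial σ R) 1 :=
  IsWeightedHomogeneous.sum _ _ _ fun i _ ↦ by
    simpa [ha i] using (isWeightedHomogeneous_X R (fun i ↦ (a i : ℚ)⁻¹) i).pow (a i)

theorem coeff_sum_single_sum_X_pow_pow_eq_zero [Fintype σ] (a : σ → ℕ) (ha : ∀ i, a i ≠ 0)
    (hsum : ∑ i, (a i : ℚ)⁻¹ ≠ 1) {n : ℕ} (hn : n ≠ 0) :
    coeff (∑ i, Finsupp.single i n) ((∑ i, X i ^ a i : MvPolynomial σ R) ^ n) = 0 := by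
  refine ((isWeightedHomogeneous_sum_X_pow a ha _).pow n).coeff_eq_zero _ ?_
  have hweight : Finsupp.weight (fun i ↦ (a i : ℚ)⁻¹) (∑ i, Finsupp.single i n)
      = n * ∑ i, (a i : ℚ)⁻¹ := by
    simp [Finsupp.weight_single, Finset.mul_sum]
  rw [hweight, nsmul_one, Ne, mul_eq_left₀ (Nat.cast_ne_zero.mpr hn)]
  exact hsum

end MvPolynomial

open MvPolynomial in
theorem stmt_17 (a : Fin 3 → ℕ) (ha : ∀ i, 0 < a i)
    (hχ : (1 : ℚ) / a 0 + 1 / a 1 + 1 / a 2 < 1) (n : ℕ) (hn : 1 ≤ n) :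
    MvPolynomial.coeff
      (Finsupp.single (0 : Fin 3) n + Finsupp.single 1 n + Finsupp.single 2 n)
      ((X 0 ^ a 0 + X 1 ^ a 1 + X 2 ^ a 2 : MvPolynomial (Fin 3) ℂ) ^ n) = 0 := by
  have hsum : ∑ i, (a i : ℚ)⁻¹ ≠ 1 := by
    simp only [Fin.sum_univ_three, ← one_div]
    exact hχ.ne
  simpa only [Fin.sum_univ_three] using
    coeff_sum_single_sum_X_pow_pow_eq_zero (R := ℂ) a (fun i ↦ (ha i).ne') hsum (by omega)
end
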